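/- Let Ĝ be a signed separable bigraph containing no induced signed cycle of length at least 6, and suppose a vertex set S minimally separates non-trivial components Ĥ_1 and Ĥ_2 of Ĝ − S. Let Ĝ_1 and Ĝ_2 be the subgraphs of Ĝ induced by V(Ĥ_1) ∪ S and V(Ĥ_2) ∪ S respectively. If Ĝ_1 or Ĝ_2 contains a member of W_5 ∪ W_6 as an induced subgraph whose distinguished vertices x and x' are exactly its vertices lying in S, then Ĝ contains a graph in F_5 ∪ D as an induced subgraph. -/

import Mathlib

universe u

/-! ## Basic unsigned notions for bipartite graphs -/

/-- `G` has an induced cycle of length at least 6 (signs, if any, are arbitrary). -/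
def HasLongInducedCycle {V : Type u} (G : SimpleGraph V) : Prop :=
  ∃ n : ℕ, 6 ≤ n ∧ ∃ f : ZMod n → V, Function.Injective f ∧
    ∀ i j : ZMod n, G.Adj (f i) (f j) ↔ (j = i + 1 ∨ i = j + 1)

/-- A graph is separable if it contains an induced `2K₂`. -/
def IsSeparableGraph {V : Type u} (G : SimpleGraph V) : Prop :=
  ∃ a b c d : V, [a, b, c, d].Pairwise (· ≠ ·) ∧
    G.Adj a b ∧ G.Adj c d ∧ ¬ G.Adj a c ∧ ¬ G.Adj a d ∧ ¬ G.Adj b c ∧ ¬ G.Adj b d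

/-- An edge `ab` of a bipartite graph is simplicial if every vertex of `N(a) - {b}`
is adjacent to every vertex of `N(b) - {a}`. -/
def SimplicialEdge {V : Type u} (G : SimpleGraph V) (a b : V) : Prop :=
  G.Adj a b ∧ ∀ c ∈ G.neighborSet a \ {b}, ∀ d ∈ G.neighborSet b \ {a}, G.Adj c d

/-- A canonical ordering of a bigraph with bipartition given by `side`
(`X` is the `side = true` part, `Y` the `side = false` part): the neighbourhoods of
the `x`'s are decreasing and those of the `y`'s are increasing. -/
def IsCanonicalOrdering {V : Type u} (G : SimpleGraph V) (side : V → Bool)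
    {α β : ℕ} (x : Fin α → V) (y : Fin β → V) : Prop :=
  Function.Injective x ∧ Function.Injective y ∧
  (∀ w : V, side w = true ↔ w ∈ Set.range x) ∧
  (∀ w : V, side w = false ↔ w ∈ Set.range y) ∧
  (∀ i j : Fin α, i ≤ j → G.neighborSet (x j) ⊆ G.neighborSet (x i)) ∧
  (∀ i j : Fin β, i ≤ j → G.neighborSet (y i) ⊆ G.neighborSet (y j))

/-- `H` is a non-trivial (i.e. containing at least one edge) connected component
of `G - S`. -/
def IsNontrivialComponentOf {V : Type u} (G : SimpleGraph V) (S H : Set V) : Prop :=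
  H ⊆ Sᶜ ∧ (G.induce H).Connected ∧
  (∀ a ∈ H, ∀ b ∈ Sᶜ, G.Adj a b → b ∈ H) ∧
  (∃ a ∈ H, ∃ b ∈ H, G.Adj a b)

/-- `S` minimally separates the non-trivial components `H` and `H'` of `G - S`:
every vertex of `S` has a neighbour in `H` and a neighbour in `H'`. -/
def MinimallySeparates {V : Type u} (G : SimpleGraph V) (S H H' : Set V) : Prop :=
  IsNontrivialComponentOf G S H ∧ IsNontrivialComponentOf G S H' ∧ H ≠ H' ∧
  ∀ s ∈ S, (∃ a ∈ H, G.Adj s a) ∧ (∃ a ∈ H', G.Adj s a)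

/-! ## Signed bigraphs -/

/-- A signed bigraph: a bipartite graph (with bipartition recorded by `side`)
whose edges carry a sign (`true` = positive, `false` = negative). -/
structure SignedBigraph (V : Type u) where
  graph : SimpleGraph V
  sign : V → V → Bool
  sign_symm : ∀ a b : V, sign a b = sign b a
  side : V → Bool
  bipartite : ∀ ⦃a b : V⦄, graph.Adj a b → side a ≠ side b

namespace SignedBigraph

variable {V : Type u}

def Adj (G : SignedBigraph V) (a b : V) : Prop := G.graph.Adj a b

/-- `N(ab) = (N(a) ∪ N(b)) - {a, b}`. -/
def edgeNbhd (G : SignedBigraph V) (a b : V) : Set V :=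
  (G.graph.neighborSet a ∪ G.graph.neighborSet b) \ {a, b}

/-- The edge `ab` is signed simplicial: `N(ab)` induces a positive biclique. -/
def SignedSimplicial (G : SignedBigraph V) (a b : V) : Prop :=
  G.Adj a b ∧
    ∀ c ∈ G.edgeNbhd a b, ∀ d ∈ G.edgeNbhd a b,
      G.side c ≠ G.side d → (G.Adj c d ∧ G.sign c d = true)

/-- Delete a set of edges from a signed bigraph (keeping all vertices). -/
def deleteEdges (G : SignedBigraph V) (s : Set (Sym2 V)) : SignedBigraph V where
  graph := G.graph.deleteEdges s
  sign := G.sign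
  sign_symm := G.sign_symm
  side := G.side
  bipartite := by
    intro a b h
    exact G.bipartite (SimpleGraph.deleteEdges_adj.mp h).1

/-- The induced signed subgraph on a set of vertices. -/
def induce (G : SignedBigraph V) (A : Set V) : SignedBigraph A where
  graph := G.graph.induce A
  sign a b := G.sign a b
  sign_symm a b := G.sign_symm a b
  side a := G.side a
  bipartite := by
    intro a b h
    exact G.bipartite h

/-- A chordal signed bigraph: the edges can be ordered `e₁, …, e_m` so that each `eᵢ`
is a signed simplicial edge of the signed bigraph obtained by deleting `e₁, …, e_{i-1}`. -/
def IsChordal (G : SignedBigraph V) : Prop :=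
  ∃ l : List (Sym2 V), l.Nodup ∧ (∀ e, e ∈ G.graph.edgeSet ↔ e ∈ l) ∧
    ∀ (i : ℕ) (h : i < l.length), ∃ a b : V,
      l.get ⟨i, h⟩ = s(a, b) ∧
      (G.deleteEdges {e | e ∈ l.take i}).SignedSimplicial a b

/-! ## Forbidden patterns F₁ – F₆, D, long cycles -/

/-- `G` contains the all-negative 4-cycle `F₁` as an induced subgraph. -/
def HasF1 (G : SignedBigraph V) : Prop :=
  ∃ u1 u2 v1 v2 : V,
    [u1, u2, v1, v2].Pairwise (· ≠ ·) ∧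
    G.Adj u1 v1 ∧ G.Adj u1 v2 ∧ G.Adj u2 v1 ∧ G.Adj u2 v2 ∧
    ¬ G.Adj u1 u2 ∧ ¬ G.Adj v1 v2 ∧
    G.sign u1 v1 = false ∧ G.sign u1 v2 = false ∧
    G.sign u2 v1 = false ∧ G.sign u2 v2 = false

/-- `G` contains a member of `F₂` (a signed `K_{2,3}`) as an induced subgraph. -/
def HasF2 (G : SignedBigraph V) : Prop :=
  ∃ u1 u2 v1 v2 v3 : V,
    [u1, u2, v1, v2, v3].Pairwise (· ≠ ·) ∧
    G.Adj u1 v1 ∧ G.Adj u1 v2 ∧ G.Adj u1 v3 ∧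
    G.Adj u2 v1 ∧ G.Adj u2 v2 ∧ G.Adj u2 v3 ∧
    ¬ G.Adj u1 u2 ∧ ¬ G.Adj v1 v2 ∧ ¬ G.Adj v1 v3 ∧ ¬ G.Adj v2 v3 ∧
    G.sign u1 v1 = false ∧ G.sign u1 v2 = false ∧
    G.sign u2 v2 = false ∧ G.sign u2 v3 = false

/-- `G` contains a member of `F₃` (a signed `K_{2,4}`) as an induced subgraph. -/
def HasF3 (G : SignedBigraph V) : Prop :=
  ∃ u1 u2 v1 v2 v3 v4 : V,
    [u1, u2, v1, v2, v3, v4].Pairwise (· ≠ ·) ∧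
    G.Adj u1 v1 ∧ G.Adj u1 v2 ∧ G.Adj u1 v3 ∧ G.Adj u1 v4 ∧
    G.Adj u2 v1 ∧ G.Adj u2 v2 ∧ G.Adj u2 v3 ∧ G.Adj u2 v4 ∧
    ¬ G.Adj u1 u2 ∧ ¬ G.Adj v1 v2 ∧ ¬ G.Adj v1 v3 ∧ ¬ G.Adj v1 v4 ∧
    ¬ G.Adj v2 v3 ∧ ¬ G.Adj v2 v4 ∧ ¬ G.Adj v3 v4 ∧
    G.sign u1 v1 = false ∧ G.sign u1 v2 = false ∧
    G.sign u2 v3 = false ∧ G.sign u2 v4 = false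

/-- `G` contains a member of `F₄` (a signed `K_{3,3}` with negative perfect matching)
as an induced subgraph. -/
def HasF4 (G : SignedBigraph V) : Prop :=
  ∃ u1 u2 u3 v1 v2 v3 : V,
    [u1, u2, u3, v1, v2, v3].Pairwise (· ≠ ·) ∧
    G.Adj u1 v1 ∧ G.Adj u1 v2 ∧ G.Adj u1 v3 ∧
    G.Adj u2 v1 ∧ G.Adj u2 v2 ∧ G.Adj u2 v3 ∧
    G.Adj u3 v1 ∧ G.Adj u3 v2 ∧ G.Adj u3 v3 ∧
    ¬ G.Adj u1 u2 ∧ ¬ G.Adj u1 u3 ∧ ¬ G.Adj u2 u3 ∧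
    ¬ G.Adj v1 v2 ∧ ¬ G.Adj v1 v3 ∧ ¬ G.Adj v2 v3 ∧
    G.sign u1 v1 = false ∧ G.sign u2 v2 = false ∧ G.sign u3 v3 = false

/-- `G` contains a member of `F₅` as an induced subgraph. -/
def HasF5 (G : SignedBigraph V) : Prop :=
  ∃ x1 x2 x3 y1 y2 y3 : V,
    [x1, x2, x3, y1, y2, y3].Pairwise (· ≠ ·) ∧
    G.Adj x1 y1 ∧ G.Adj x1 y2 ∧ ¬ G.Adj x1 y3 ∧
    G.Adj x2 y1 ∧ G.Adj x2 y2 ∧ G.Adj x2 y3 ∧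
    G.Adj x3 y1 ∧ G.Adj x3 y2 ∧ G.Adj x3 y3 ∧
    ¬ G.Adj x1 x2 ∧ ¬ G.Adj x1 x3 ∧ ¬ G.Adj x2 x3 ∧
    ¬ G.Adj y1 y2 ∧ ¬ G.Adj y1 y3 ∧ ¬ G.Adj y2 y3 ∧
    G.sign x2 y1 = false ∧ G.sign x3 y2 = false

/-- `G` contains a member of `F₆` as an induced subgraph. -/
def HasF6 (G : SignedBigraph V) : Prop :=
  ∃ x1 x2 x3 x4 y1 y2 y3 y4 : V,
    [x1, x2, x3, x4, y1, y2, y3, y4].Pairwise (· ≠ ·) ∧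
    G.Adj x1 y1 ∧ G.Adj x1 y2 ∧ ¬ G.Adj x1 y3 ∧ ¬ G.Adj x1 y4 ∧
    G.Adj x2 y1 ∧ G.Adj x2 y2 ∧ ¬ G.Adj x2 y3 ∧ ¬ G.Adj x2 y4 ∧
    G.Adj x3 y1 ∧ G.Adj x3 y2 ∧ G.Adj x3 y3 ∧ G.Adj x3 y4 ∧
    G.Adj x4 y1 ∧ G.Adj x4 y2 ∧ G.Adj x4 y3 ∧ G.Adj x4 y4 ∧
    ¬ G.Adj x1 x2 ∧ ¬ G.Adj x1 x3 ∧ ¬ G.Adj x1 x4 ∧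
    ¬ G.Adj x2 x3 ∧ ¬ G.Adj x2 x4 ∧ ¬ G.Adj x3 x4 ∧
    ¬ G.Adj y1 y2 ∧ ¬ G.Adj y1 y3 ∧ ¬ G.Adj y1 y4 ∧
    ¬ G.Adj y2 y3 ∧ ¬ G.Adj y2 y4 ∧ ¬ G.Adj y3 y4 ∧
    G.sign x1 y1 = false ∧ G.sign x2 y1 = false ∧ G.sign x3 y2 = false ∧
    G.sign x4 y3 = false ∧ G.sign x4 y4 = false

/-- `G` contains a member of `D` (a 6-cycle `x₁y₁x₂y₃x₃y₂x₁` plus a negative chord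
`x₂y₂`) as an induced subgraph. -/
def HasD (G : SignedBigraph V) : Prop :=
  ∃ x1 x2 x3 y1 y2 y3 : V,
    [x1, x2, x3, y1, y2, y3].Pairwise (· ≠ ·) ∧
    G.Adj x1 y1 ∧ G.Adj y1 x2 ∧ G.Adj x2 y3 ∧ G.Adj y3 x3 ∧
    G.Adj x3 y2 ∧ G.Adj y2 x1 ∧
    G.Adj x2 y2 ∧ G.sign x2 y2 = false ∧
    ¬ G.Adj x1 y3 ∧ ¬ G.Adj x3 y1 ∧
    ¬ G.Adj x1 x2 ∧ ¬ G.Adj x1 x3 ∧ ¬ G.Adj x2 x3 ∧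
    ¬ G.Adj y1 y2 ∧ ¬ G.Adj y1 y3 ∧ ¬ G.Adj y2 y3

/-- `G` contains an induced signed cycle of length at least 6. -/
def HasLongCycle (G : SignedBigraph V) : Prop :=
  HasLongInducedCycle G.graph

/-! ## Minimal forbidden patterns M₁ – M₅ for complete bigraphs -/

def HasM1 (G : SignedBigraph V) : Prop := G.HasF1

def HasM2 (G : SignedBigraph V) : Prop :=
  ∃ u1 u2 v1 v2 v3 : V,
    [u1, u2, v1, v2, v3].Pairwise (· ≠ ·) ∧
    G.Adj u1 v1 ∧ G.Adj u1 v2 ∧ G.Adj u1 v3 ∧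
    G.Adj u2 v1 ∧ G.Adj u2 v2 ∧ G.Adj u2 v3 ∧
    ¬ G.Adj u1 u2 ∧ ¬ G.Adj v1 v2 ∧ ¬ G.Adj v1 v3 ∧ ¬ G.Adj v2 v3 ∧
    G.sign u1 v1 = false ∧ G.sign u1 v2 = false ∧
    G.sign u2 v2 = false ∧ G.sign u2 v3 = false ∧
    G.sign u1 v3 = true ∧ G.sign u2 v1 = true

def HasM3 (G : SignedBigraph V) : Prop :=
  ∃ u1 u2 v1 v2 v3 v4 : V,
    [u1, u2, v1, v2, v3, v4].Pairwise (· ≠ ·) ∧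
    G.Adj u1 v1 ∧ G.Adj u1 v2 ∧ G.Adj u1 v3 ∧ G.Adj u1 v4 ∧
    G.Adj u2 v1 ∧ G.Adj u2 v2 ∧ G.Adj u2 v3 ∧ G.Adj u2 v4 ∧
    ¬ G.Adj u1 u2 ∧ ¬ G.Adj v1 v2 ∧ ¬ G.Adj v1 v3 ∧ ¬ G.Adj v1 v4 ∧
    ¬ G.Adj v2 v3 ∧ ¬ G.Adj v2 v4 ∧ ¬ G.Adj v3 v4 ∧
    G.sign u1 v1 = false ∧ G.sign u1 v2 = false ∧
    G.sign u2 v3 = false ∧ G.sign u2 v4 = false ∧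
    G.sign u1 v3 = true ∧ G.sign u1 v4 = true ∧
    G.sign u2 v1 = true ∧ G.sign u2 v2 = true

def HasM4 (G : SignedBigraph V) : Prop :=
  ∃ u1 u2 u3 v1 v2 v3 : V,
    [u1, u2, u3, v1, v2, v3].Pairwise (· ≠ ·) ∧
    G.Adj u1 v1 ∧ G.Adj u1 v2 ∧ G.Adj u1 v3 ∧
    G.Adj u2 v1 ∧ G.Adj u2 v2 ∧ G.Adj u2 v3 ∧
    G.Adj u3 v1 ∧ G.Adj u3 v2 ∧ G.Adj u3 v3 ∧
    ¬ G.Adj u1 u2 ∧ ¬ G.Adj u1 u3 ∧ ¬ G.Adj u2 u3 ∧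
    ¬ G.Adj v1 v2 ∧ ¬ G.Adj v1 v3 ∧ ¬ G.Adj v2 v3 ∧
    G.sign u1 v1 = false ∧ G.sign u2 v2 = false ∧ G.sign u3 v3 = false ∧
    G.sign u1 v2 = true ∧ G.sign u1 v3 = true ∧ G.sign u2 v1 = true ∧
    G.sign u2 v3 = true ∧ G.sign u3 v1 = true ∧ G.sign u3 v2 = true

def HasM5 (G : SignedBigraph V) : Prop :=
  ∃ x1 x2 x3 y1 y2 y3 : V,
    [x1, x2, x3, y1, y2, y3].Pairwise (· ≠ ·) ∧
    G.Adj x1 y1 ∧ G.Adj x1 y2 ∧ G.Adj x1 y3 ∧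
    G.Adj x2 y1 ∧ G.Adj x2 y2 ∧ G.Adj x2 y3 ∧
    G.Adj x3 y1 ∧ G.Adj x3 y2 ∧ G.Adj x3 y3 ∧
    ¬ G.Adj x1 x2 ∧ ¬ G.Adj x1 x3 ∧ ¬ G.Adj x2 x3 ∧
    ¬ G.Adj y1 y2 ∧ ¬ G.Adj y1 y3 ∧ ¬ G.Adj y2 y3 ∧
    G.sign x1 y1 = false ∧ G.sign x1 y2 = false ∧
    G.sign x2 y2 = false ∧ G.sign x3 y3 = false ∧
    G.sign x1 y3 = true ∧ G.sign x2 y1 = true ∧ G.sign x2 y3 = true ∧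
    G.sign x3 y1 = true ∧ G.sign x3 y2 = true

/-! ## The patterns W₁ – W₆ (relativized to an ambient vertex set `A`, with the
distinguished vertices being exactly the vertices in `S`). -/

def HasW1In (G : SignedBigraph V) (A S : Set V) : Prop :=
  ∃ u y x z : V, u ∈ A ∧ y ∈ A ∧ x ∈ A ∧ z ∈ A ∧
    [u, y, x, z].Pairwise (· ≠ ·) ∧
    G.Adj u y ∧ G.Adj u z ∧ G.Adj x y ∧ G.Adj x z ∧
    ¬ G.Adj u x ∧ ¬ G.Adj y z ∧
    G.sign x y = false ∧ G.sign x z = false ∧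
    x ∈ S ∧ u ∉ S ∧ y ∉ S ∧ z ∉ S

def HasW2In (G : SignedBigraph V) (A S : Set V) : Prop :=
  ∃ u y v z p : V, u ∈ A ∧ y ∈ A ∧ v ∈ A ∧ z ∈ A ∧ p ∈ A ∧
    [u, y, v, z, p].Pairwise (· ≠ ·) ∧
    G.Adj u y ∧ G.Adj u z ∧ G.Adj v y ∧ G.Adj v z ∧ G.Adj p v ∧
    ¬ G.Adj u v ∧ ¬ G.Adj y z ∧ ¬ G.Adj p u ∧ ¬ G.Adj p y ∧ ¬ G.Adj p z ∧
    G.sign v y = false ∧ G.sign v z = false ∧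
    p ∈ S ∧ u ∉ S ∧ y ∉ S ∧ v ∉ S ∧ z ∉ S

def HasW3In (G : SignedBigraph V) (A S : Set V) : Prop :=
  ∃ u y v z p : V, u ∈ A ∧ y ∈ A ∧ v ∈ A ∧ z ∈ A ∧ p ∈ A ∧
    [u, y, v, z, p].Pairwise (· ≠ ·) ∧
    G.Adj u y ∧ G.Adj u z ∧ G.Adj v y ∧ G.Adj v z ∧ G.Adj p v ∧ G.Adj p u ∧
    ¬ G.Adj u v ∧ ¬ G.Adj y z ∧ ¬ G.Adj p y ∧ ¬ G.Adj p z ∧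
    G.sign v y = false ∧ G.sign v z = false ∧ G.sign p u = false ∧
    p ∈ S ∧ u ∉ S ∧ y ∉ S ∧ v ∉ S ∧ z ∉ S

def HasW4In (G : SignedBigraph V) (A S : Set V) : Prop :=
  ∃ u y c z p q : V, u ∈ A ∧ y ∈ A ∧ c ∈ A ∧ z ∈ A ∧ p ∈ A ∧ q ∈ A ∧
    [u, y, c, z, p, q].Pairwise (· ≠ ·) ∧
    G.Adj u y ∧ G.Adj u z ∧ G.Adj c y ∧ G.Adj c z ∧ G.Adj p c ∧ G.Adj p u ∧
    G.Adj q p ∧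
    ¬ G.Adj u c ∧ ¬ G.Adj y z ∧ ¬ G.Adj p y ∧ ¬ G.Adj p z ∧
    ¬ G.Adj q u ∧ ¬ G.Adj q y ∧ ¬ G.Adj q c ∧ ¬ G.Adj q z ∧
    G.sign c y = false ∧ G.sign c z = false ∧ G.sign p u = false ∧
    q ∈ S ∧ u ∉ S ∧ y ∉ S ∧ c ∉ S ∧ z ∉ S ∧ p ∉ S

def HasW5In (G : SignedBigraph V) (A S : Set V) : Prop :=
  ∃ u y v z x : V, u ∈ A ∧ y ∈ A ∧ v ∈ A ∧ z ∈ A ∧ x ∈ A ∧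
    [u, y, v, z, x].Pairwise (· ≠ ·) ∧
    G.Adj u y ∧ G.Adj u z ∧ G.Adj v y ∧ G.Adj v z ∧ G.Adj x v ∧ G.Adj x u ∧
    ¬ G.Adj u v ∧ ¬ G.Adj y z ∧ ¬ G.Adj x y ∧ ¬ G.Adj x z ∧
    G.sign v y = false ∧ G.sign x u = false ∧
    x ∈ S ∧ y ∈ S ∧ u ∉ S ∧ v ∉ S ∧ z ∉ S

def HasW6In (G : SignedBigraph V) (A S : Set V) : Prop :=
  ∃ u y v z x : V, u ∈ A ∧ y ∈ A ∧ v ∈ A ∧ z ∈ A ∧ x ∈ A ∧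
    [u, y, v, z, x].Pairwise (· ≠ ·) ∧
    G.Adj u y ∧ G.Adj u z ∧ G.Adj v y ∧ G.Adj v z ∧ G.Adj x v ∧
    ¬ G.Adj u v ∧ ¬ G.Adj y z ∧ ¬ G.Adj x u ∧ ¬ G.Adj x y ∧ ¬ G.Adj x z ∧
    G.sign v y = false ∧
    x ∈ S ∧ y ∈ S ∧ u ∉ S ∧ v ∉ S ∧ z ∉ S

/-! ## Tadpoles, sums and joins -/

/-- The vertex set of a tadpole with heads `w, y, z` and path vertices `x`. -/
def tadVerts {n : ℕ} (w y z : V) (x : Fin n → V) : Set V :=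
  {w, y, z} ∪ Set.range x

/-- The data `(w, y, z, x)` forms an induced tadpole in `G`:
`w, y, z, x ⟨k⟩` induce a 4-cycle whose edges `x ⟨k⟩ y` and `x ⟨k⟩ z` are negative,
together with the induced path `x ⟨k⟩, x ⟨k-1⟩, …, x 0`; the vertex `x 0` is the end
and `w, y, z` are the heads.  If `t2 = true` the tadpole is of type 2: there is
additionally a negative edge from `w` to `x ⟨k-1⟩`.
(The paper's parameter `k ≥ 1` corresponds to `k + 1` here.) -/
structure IsInducedTadpole (G : SignedBigraph V) (k : ℕ) (t2 : Bool)
    (w y z : V) (x : Fin (k + 1) → V) : Prop where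
  t2_len : t2 = true → 1 ≤ k
  inj : Function.Injective x
  w_notmem : ∀ i, w ≠ x i
  y_notmem : ∀ i, y ≠ x i
  z_notmem : ∀ i, z ≠ x i
  wy : w ≠ y
  wz : w ≠ z
  yz : y ≠ z
  adj_wy : G.Adj w y
  adj_wz : G.Adj w z
  not_adj_yz : ¬ G.Adj y z
  adj_path : ∀ i j : Fin (k + 1), G.Adj (x i) (x j) ↔ (i.1 + 1 = j.1 ∨ j.1 + 1 = i.1)
  adj_y : ∀ i : Fin (k + 1), G.Adj y (x i) ↔ i.1 = k
  adj_z : ∀ i : Fin (k + 1), G.Adj z (x i) ↔ i.1 = k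
  adj_w : ∀ i : Fin (k + 1), G.Adj w (x i) ↔ (t2 = true ∧ i.1 + 1 = k)
  sign_y : ∀ i : Fin (k + 1), i.1 = k → G.sign (x i) y = false
  sign_z : ∀ i : Fin (k + 1), i.1 = k → G.sign (x i) z = false
  sign_w : ∀ i : Fin (k + 1), t2 = true → i.1 + 1 = k → G.sign w (x i) = false

/-- `G` contains a sum of two tadpoles (identified at their ends) as an induced
subgraph. -/
def HasTadpoleSum (G : SignedBigraph V) : Prop :=
  ∃ (k k' : ℕ) (t t' : Bool) (w y z w' y' z' : V)
    (x : Fin (k + 1) → V) (x' : Fin (k' + 1) → V),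
    G.IsInducedTadpole k t w y z x ∧ G.IsInducedTadpole k' t' w' y' z' x' ∧
    x 0 = x' 0 ∧
    tadVerts w y z x ∩ tadVerts w' y' z' x' = {x 0} ∧
    ∀ a ∈ tadVerts w y z x, ∀ b ∈ tadVerts w' y' z' x',
      a ≠ x 0 → b ≠ x' 0 → ¬ G.Adj a b

/-- `G` contains a join of two tadpoles as an induced subgraph: two disjoint induced
tadpoles such that the edges between them are exactly those joining the end of each
tadpole to all vertices of the other tadpole in the opposite partite set; all these
edges are positive, except that the edge from an end to the head `w` of the other
tadpole may be of either sign when that tadpole is a member of `W₁` (i.e. has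
`k = 0` and is of type 1), in which case the ends are required to be adjacent. -/
def HasTadpoleJoin (G : SignedBigraph V) : Prop :=
  ∃ (k k' : ℕ) (t t' : Bool) (w y z w' y' z' : V)
    (x : Fin (k + 1) → V) (x' : Fin (k' + 1) → V),
    G.IsInducedTadpole k t w y z x ∧ G.IsInducedTadpole k' t' w' y' z' x' ∧
    Disjoint (tadVerts w y z x) (tadVerts w' y' z' x') ∧
    (∀ a ∈ tadVerts w y z x, ∀ b ∈ tadVerts w' y' z' x',
      (G.Adj a b ↔ ((a = x 0 ∨ b = x' 0) ∧ G.side a ≠ G.side b))) ∧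
    ((k = 0 ∧ t = false) ∨ (k' = 0 ∧ t' = false) → G.side (x 0) ≠ G.side (x' 0)) ∧
    (∀ a ∈ tadVerts w y z x, ∀ b ∈ tadVerts w' y' z' x', G.Adj a b →
      ¬ (a = x 0 ∧ b = w' ∧ k' = 0 ∧ t' = false) →
      ¬ (a = w ∧ b = x' 0 ∧ k = 0 ∧ t = false) →
      G.sign a b = true)

/-- `G` contains a member of
`ℱ = F₁ ∪ F₂ ∪ F₃ ∪ F₄ ∪ F₅ ∪ F₆ ∪ 𝒞 ∪ D ∪ 𝒮 ∪ 𝒥` as an induced subgraph. -/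
def HasForbidden (G : SignedBigraph V) : Prop :=
  G.HasF1 ∨ G.HasF2 ∨ G.HasF3 ∨ G.HasF4 ∨ G.HasF5 ∨ G.HasF6 ∨
  G.HasLongCycle ∨ G.HasD ∨ G.HasTadpoleSum ∨ G.HasTadpoleJoin

/-- `G` is `ℱ`-free. -/
def FFree (G : SignedBigraph V) : Prop := ¬ G.HasForbidden

end SignedBigraph

/-! ## Concrete complete signed bipartite graphs (for the graphs M₁ – M₅) -/

/-- The complete bipartite graph on `Fin a ⊕ Fin b`. -/
def cbsGraph (a b : ℕ) : SimpleGraph (Fin a ⊕ Fin b) where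
  Adj u v := u.isLeft ≠ v.isLeft
  symm := ⟨fun _ _ h => Ne.symm h⟩
  loopless := ⟨fun _ h => h rfl⟩

def cbsSign {a b : ℕ} (sgn : Fin a → Fin b → Bool) :
    Fin a ⊕ Fin b → Fin a ⊕ Fin b → Bool
  | Sum.inl i, Sum.inr j => sgn i j
  | Sum.inr j, Sum.inl i => sgn i j
  | _, _ => true

/-- The complete signed bipartite graph with parts `Fin a`, `Fin b`, and signs given
by `sgn`. -/
def completeSignedBigraph (a b : ℕ) (sgn : Fin a → Fin b → Bool) :
    SignedBigraph (Fin a ⊕ Fin b) where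
  graph := cbsGraph a b
  sign := cbsSign sgn
  sign_symm := by
    intro u v
    cases u <;> cases v <;> rfl
  side := Sum.isLeft
  bipartite := fun _ _ h => h

/-- `M₁`: the all-negative 4-cycle. -/
def Mgraph1 : SignedBigraph (Fin 2 ⊕ Fin 2) :=
  completeSignedBigraph 2 2 (fun _ _ => false)

/-- `M₂`. -/
def Mgraph2 : SignedBigraph (Fin 2 ⊕ Fin 3) :=
  completeSignedBigraph 2 3
    (fun i j => ! decide ((i = 0 ∧ (j = 0 ∨ j = 1)) ∨ (i = 1 ∧ (j = 1 ∨ j = 2))))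

/-- `M₃`. -/
def Mgraph3 : SignedBigraph (Fin 2 ⊕ Fin 4) :=
  completeSignedBigraph 2 4
    (fun i j => ! decide ((i = 0 ∧ (j = 0 ∨ j = 1)) ∨ (i = 1 ∧ (j = 2 ∨ j = 3))))

/-- `M₄`. -/
def Mgraph4 : SignedBigraph (Fin 3 ⊕ Fin 3) :=
  completeSignedBigraph 3 3 (fun i j => ! decide ((i : ℕ) = (j : ℕ)))

/-- `M₅`. -/
def Mgraph5 : SignedBigraph (Fin 3 ⊕ Fin 3) :=
  completeSignedBigraph 3 3
    (fun i j => ! decide ((i = 0 ∧ (j = 0 ∨ j = 1)) ∨ (i = 1 ∧ j = 1) ∨ (i = 2 ∧ j = 2)))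

/-!
The `W₅`/`W₆` pattern provides a vertex `v ∈ Ĥ₁` adjacent to the two non-adjacent
distinguished vertices `x, y ∈ S`. Both have neighbours in the connected `Ĥ₂`, so take a
shortest `x`–`y` path through `Ĥ₂`: it is chordless, of even length `ℓ ≥ 2` by bipartiteness,
and `v` has no neighbour in `Ĥ₂`, so `v` closes it to an induced cycle of length `ℓ + 2`.
With no induced cycle of length at least 6 this forces `ℓ = 2`, i.e. a common neighbour
`a ∈ Ĥ₂` of `x` and `y`. As `a` has no neighbour in `Ĥ₁`, adding it to the `W₅` (resp. `W₆`)
pattern gives an induced member of `F₅` (resp. `D`).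
-/

theorem ZMod.eq_add_one_iff_val {n : ℕ} [NeZero n] (i j : ZMod n) :
    j = i + 1 ↔ j.val = i.val + 1 ∨ (i.val + 1 = n ∧ j.val = 0) := by
  have hi := i.val_lt
  have hj := j.val_lt
  rw [← (ZMod.val_injective n).eq_iff, ZMod.val_add, ZMod.val_one_eq_one_mod, Nat.add_mod_mod]
  rcases Nat.lt_or_ge (i.val + 1) n with h | h
  · rw [Nat.mod_eq_of_lt h]; omega
  · rw [show i.val + 1 = n by omega, Nat.mod_self]; omega

namespace SimpleGraph

variable {V : Type u} {G : SimpleGraph V}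

theorem hasLongInducedCycle_of_adj_iff {n : ℕ} (hn : 6 ≤ n) {g : ℕ → V}
    (hinj : ∀ a < n, ∀ b < n, g a = g b → a = b)
    (hadj : ∀ a < n, ∀ b < n,
      G.Adj (g a) (g b) ↔ (b = a + 1 ∨ a = b + 1 ∨ (a + 1 = n ∧ b = 0) ∨ (b + 1 = n ∧ a = 0))) :
    HasLongInducedCycle G := by
  have : NeZero n := ⟨by omega⟩
  refine ⟨n, hn, fun i => g i.val, fun i j h => ZMod.val_injective n (hinj _ i.val_lt _ j.val_lt h),
    fun i j => ?_⟩
  rw [hadj _ i.val_lt _ j.val_lt, ZMod.eq_add_one_iff_val, ZMod.eq_add_one_iff_val]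
  tauto

namespace Walk

variable {u v : V}

theorem dist_getVert_of_length_eq_dist {p : G.Walk u v} (hp : p.length = G.dist u v)
    {i j : ℕ} (hij : i ≤ j) (hj : j ≤ p.length) :
    G.dist (p.getVert i) (p.getVert j) = j - i := by
  have h := length_eq_dist_of_subwalk hp ((isSubwalk_take _ (j - i)).trans (isSubwalk_drop p i))
  rw [take_length, drop_length, drop_getVert, Nat.add_sub_cancel' hij] at h
  omega

theorem adj_getVert_iff_of_length_eq_dist {p : G.Walk u v} (hp : p.length = G.dist u v)
    {i j : ℕ} (hi : i ≤ p.length) (hj : j ≤ p.length) :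
    G.Adj (p.getVert i) (p.getVert j) ↔ j = i + 1 ∨ i = j + 1 := by
  rw [← dist_eq_one_iff_adj]
  rcases le_total i j with hij | hji
  · rw [dist_getVert_of_length_eq_dist hp hij hj]; omega
  · rw [dist_comm, dist_getVert_of_length_eq_dist hp hji hi]; omega

theorem getVert_inj_of_length_eq_dist {p : G.Walk u v} (hp : p.length = G.dist u v)
    {i j : ℕ} (hi : i ≤ p.length) (hj : j ≤ p.length) :
    p.getVert i = p.getVert j ↔ i = j :=
  ⟨fun h => (p.isPath_of_length_eq_dist hp).getVert_injOn hi hj h, fun h => h ▸ rfl⟩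

end Walk

theorem hasLongInducedCycle_of_length_eq_dist {T : Set V} {x y : T} {p : (G.induce T).Walk x y}
    (hp : p.length = (G.induce T).dist x y) (hlen : 4 ≤ p.length) {v : V} (hvT : v ∉ T)
    (hvx : G.Adj v x) (hvy : G.Adj v y) (hv : ∀ t ∈ T, G.Adj v t → t = x ∨ t = y) :
    HasLongInducedCycle G := by
  have hinj {i j : ℕ} (hi : i ≤ p.length) (hj : j ≤ p.length) :
      (p.getVert i : V) = p.getVert j ↔ i = j := by
    rw [Subtype.coe_inj, Walk.getVert_inj_of_length_eq_dist hp hi hj]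
  have hvp {k : ℕ} (hk : k ≤ p.length) : G.Adj v (p.getVert k) ↔ k = 0 ∨ k = p.length := by
    refine ⟨fun h => ?_, ?_⟩
    · rcases hv _ (p.getVert k).2 h with h | h
      · exact .inl ((hinj hk (Nat.zero_le _)).1 (by simpa using h))
      · exact .inr ((hinj hk le_rfl).1 (by simpa using h))
    · rintro (rfl | rfl) <;> simpa
  refine hasLongInducedCycle_of_adj_iff (n := p.length + 2)
    (g := fun k => match k with | 0 => v | k + 1 => p.getVert k) (by omega) ?_ ?_
  · rintro (_ | a) ha (_ | b) hb h
    · rfl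
    · simp only at h; exact absurd (h ▸ (p.getVert b).2) hvT
    · simp only at h; exact absurd (h ▸ (p.getVert a).2) hvT
    · simp only at h
      rw [hinj (by omega) (by omega)] at h
      rw [h]
  · rintro (_ | a) ha (_ | b) hb
    · simp only [G.irrefl, false_iff]; omega
    · simp only [and_true]
      rw [hvp (k := b) (by omega)]; omega
    · simp only [and_true]
      rw [G.adj_comm, hvp (k := a) (by omega)]; omega
    · change (G.induce T).Adj (p.getVert a) (p.getVert b) ↔ _
      rw [Walk.adj_getVert_iff_of_length_eq_dist hp (by omega) (by omega)]
      omega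

end SimpleGraph

section Separation

variable {V : Type u} {G : SimpleGraph V} {S H H' : Set V}

theorem IsNontrivialComponentOf.subset_of_mem (hH : IsNontrivialComponentOf G S H)
    (hH' : IsNontrivialComponentOf G S H') {w : V} (hw : w ∈ H) (hw' : w ∈ H') : H ⊆ H' := by
  have walk_mem {a b : H} (p : (G.induce H).Walk a b) (ha : (a : V) ∈ H') : (b : V) ∈ H' := by
    induction p with
    | nil => exact ha
    | cons hadj _ ih => exact ih (hH'.2.2.1 _ ha _ (hH.1 (Subtype.prop _)) hadj)
  intro c hc
  obtain ⟨p⟩ := hH.2.1.preconnected ⟨w, hw⟩ ⟨c, hc⟩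
  exact walk_mem p hw'

namespace MinimallySeparates

theorem symm (h : MinimallySeparates G S H H') : MinimallySeparates G S H' H :=
  ⟨h.2.1, h.1, h.2.2.1.symm, fun s hs => (h.2.2.2 s hs).symm⟩

theorem disjoint (h : MinimallySeparates G S H H') : Disjoint H H' :=
  Set.disjoint_left.2 fun _ hw hw' => h.2.2.1 <|
    (h.1.subset_of_mem h.2.1 hw hw').antisymm (h.2.1.subset_of_mem h.1 hw' hw)

theorem not_adj (h : MinimallySeparates G S H H') {a b : V} (ha : a ∈ H) (hb : b ∈ H') :
    ¬ G.Adj a b := fun hab =>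
  Set.disjoint_left.1 h.disjoint (h.1.2.2.1 a ha b (h.2.1.1 hb) hab) hb

theorem reachable_induce (h : MinimallySeparates G S H H') {x y : V} (hx : x ∈ S) (hy : y ∈ S) :
    (G.induce (insert x (insert y H'))).Reachable ⟨x, Set.mem_insert _ _⟩
      ⟨y, Set.mem_insert_of_mem _ (Set.mem_insert _ _)⟩ := by
  obtain ⟨a, ha, hxa⟩ := (h.2.2.2 x hx).2
  obtain ⟨b, hb, hyb⟩ := (h.2.2.2 y hy).2
  have hsub : H' ⊆ insert x (insert y H') := fun _ hw => .inr (.inr hw)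
  have hab := (h.2.1.2.1.preconnected ⟨a, ha⟩ ⟨b, hb⟩).map (G.induceHomOfLE hsub).toHom
  have hxa' : (G.induce (insert x (insert y H'))).Adj ⟨x, Set.mem_insert _ _⟩ ⟨a, hsub ha⟩ := hxa
  have hby' : (G.induce (insert x (insert y H'))).Adj ⟨b, hsub hb⟩
      ⟨y, Set.mem_insert_of_mem _ (Set.mem_insert _ _)⟩ := hyb.symm
  exact hxa'.reachable.trans (hab.trans hby'.reachable)

end MinimallySeparates

end Separation

namespace SignedBigraph

variable {V : Type u} {G : SignedBigraph V} {S H H' : Set V}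

protected theorem Adj.symm {a b : V} (h : G.Adj a b) : G.Adj b a :=
  G.graph.adj_symm h

theorem exists_common_neighbor (hC : ¬ G.HasLongCycle)
    (hmin : MinimallySeparates G.graph S H H') {x y v : V} (hx : x ∈ S) (hy : y ∈ S)
    (hv : v ∈ H) (hvx : G.Adj v x) (hvy : G.Adj v y) (hxy : ¬ G.Adj x y) (hne : x ≠ y) :
    ∃ a ∈ H', G.Adj x a ∧ G.Adj y a := by
  have hreach := hmin.reachable_induce hx hy
  set K := G.graph.induce (insert x (insert y H'))
  obtain ⟨p, hp⟩ := hreach.exists_walk_length_eq_dist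
  have hvS : v ∉ S := hmin.1.1 hv
  have hvT : v ∉ insert x (insert y H') := by
    rintro (rfl | rfl | hv')
    · exact hvS hx
    · exact hvS hy
    · exact Set.disjoint_left.1 hmin.disjoint hv hv'
  have hside : G.side x = G.side y := by
    rw [Bool.eq_not.2 (G.bipartite hvx).symm, Bool.eq_not.2 (G.bipartite hvy).symm]
  have heven : Even p.length :=
    ((SimpleGraph.Coloring.mk (G := K) (fun t => G.side t)
      fun h => G.bipartite h).even_length_iff_congr p).2 (iff_of_eq (congrArg (· = true) hside))
  have hgt : 1 < p.length := hp ▸ hreach.one_lt_dist_of_ne_of_not_adj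
    (fun h => hne (congrArg Subtype.val h)) hxy
  have hle : p.length < 4 := by
    by_contra! hlen
    refine hC (SimpleGraph.hasLongInducedCycle_of_length_eq_dist hp hlen hvT hvx hvy ?_)
    rintro t (rfl | rfl | ht) hvt
    exacts [.inl rfl, .inr rfl, absurd hvt (hmin.not_adj hv ht)]
  have hlen : p.length = 2 := by obtain ⟨k, hk⟩ := heven; omega
  have hxa := p.adj_getVert_succ (i := 0) (by omega)
  have hay := p.adj_getVert_succ (i := 1) (by omega)
  rw [p.getVert_zero] at hxa
  rw [show 1 + 1 = p.length by omega, p.getVert_length] at hay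
  refine ⟨p.getVert 1, ?_, hxa, hay.symm⟩
  rcases (p.getVert 1).2 with h | h | h
  exacts [(hxa.ne (Subtype.ext h.symm)).elim, (hay.ne (Subtype.ext h)).elim, h]

theorem hasF5_of_hasW5In (hC : ¬ G.HasLongCycle) (hmin : MinimallySeparates G.graph S H H')
    (hw : G.HasW5In (H ∪ S) S) : G.HasF5 := by
  obtain ⟨u, y, v, z, x, hu, -, hv, hz, -, hne, huy, huz, hvy, hvz, hxv, hxu, huv, hyz, hxy, hxz,
    hsvy, hsxu, hxS, hyS, huS, hvS, hzS⟩ := hw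
  have huH := hu.resolve_right huS
  have hvH := hv.resolve_right hvS
  have hzH := hz.resolve_right hzS
  obtain ⟨a, haH', hxa, hya⟩ := exists_common_neighbor hC hmin hxS hyS hvH hxv.symm hvy hxy
    (by rintro rfl; simp at hne)
  have hfar {w : V} (hw : w ∈ H) : w ≠ a ∧ ¬ G.Adj a w :=
    ⟨hmin.disjoint.ne_of_mem hw haH', fun h => hmin.not_adj hw haH' h.symm⟩
  have haS : a ∉ S := hmin.2.1.1 haH'
  refine ⟨a, u, v, x, y, z, ?_, hxa.symm, hya.symm, (hfar hzH).2, hxu.symm, huy, huz, hxv.symm,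
    hvy, hvz, (hfar huH).2, (hfar hvH).2, huv, hxy, hxz, hyz, (G.sign_symm u x).trans hsxu, hsvy⟩
  simp only [List.pairwise_cons, List.mem_cons, List.not_mem_nil, or_false, forall_eq_or_imp,
    forall_eq, List.Pairwise.nil, and_true] at hne ⊢
  grind

theorem hasD_of_hasW6In (hC : ¬ G.HasLongCycle) (hmin : MinimallySeparates G.graph S H H')
    (hw : G.HasW6In (H ∪ S) S) : G.HasD := by
  obtain ⟨u, y, v, z, x, hu, -, hv, hz, -, hne, huy, huz, hvy, hvz, hxv, huv, hyz, hxu, hxy, hxz,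
    hsvy, hxS, hyS, huS, hvS, hzS⟩ := hw
  have huH := hu.resolve_right huS
  have hvH := hv.resolve_right hvS
  have hzH := hz.resolve_right hzS
  obtain ⟨a, haH', hxa, hya⟩ := exists_common_neighbor hC hmin hxS hyS hvH hxv.symm hvy hxy
    (by rintro rfl; simp at hne)
  have hfar {w : V} (hw : w ∈ H) : w ≠ a ∧ ¬ G.Adj a w :=
    ⟨hmin.disjoint.ne_of_mem hw haH', fun h => hmin.not_adj hw haH' h.symm⟩
  have haS : a ∉ S := hmin.2.1.1 haH'
  refine ⟨u, v, a, z, y, x, ?_, huz, hvz.symm, hxv.symm, hxa, hya.symm, huy.symm, hvy, hsvy,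
    fun h => hxu h.symm, (hfar hzH).2, huv, fun h => (hfar huH).2 h.symm,
    fun h => (hfar hvH).2 h.symm, fun h => hyz h.symm, fun h => hxz h.symm, fun h => hxy h.symm⟩
  simp only [List.pairwise_cons, List.mem_cons, List.not_mem_nil, or_false, forall_eq_or_imp,
    forall_eq, List.Pairwise.nil, and_true] at hne ⊢
  grind

end SignedBigraph

open SignedBigraph in
theorem hasF5orD_of_W5W6_general
    {V : Type u} (G : SignedBigraph V)
    (hC : ¬ G.HasLongCycle)
    (S H1 H2 : Set V)
    (hmin : MinimallySeparates G.graph S H1 H2)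
    (hw : G.HasW5In (H1 ∪ S) S ∨ G.HasW6In (H1 ∪ S) S ∨
          G.HasW5In (H2 ∪ S) S ∨ G.HasW6In (H2 ∪ S) S) :
    G.HasF5 ∨ G.HasD := by
  rcases hw with h | h | h | h
  · exact .inl (hasF5_of_hasW5In hC hmin h)
  · exact .inr (hasD_of_hasW6In hC hmin h)
  · exact .inl (hasF5_of_hasW5In hC hmin.symm h)
  · exact .inr (hasD_of_hasW6In hC hmin.symm h)

open SignedBigraph in
/-- Corollary 4.5: let `S` minimally separate the non-trivial
components `Ĥ₁`, `Ĥ₂` of a signed separable bigraph with no induced signed cycle of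
length ≥ 6; if the subgraph induced by `Ĥ₁ ∪ S` or `Ĥ₂ ∪ S` contains a member of
`W₅ ∪ W₆` whose distinguished vertices are exactly its vertices in `S`, then `Ĝ`
contains a member of `F₅ ∪ D` as an induced subgraph. -/
theorem hasF5orD_of_W5W6
    {V : Type u} (G : SignedBigraph V)
    (hsep : IsSeparableGraph G.graph)
    (hC : ¬ G.HasLongCycle)
    (S H1 H2 : Set V)
    (hmin : MinimallySeparates G.graph S H1 H2)
    (hw : G.HasW5In (H1 ∪ S) S ∨ G.HasW6In (H1 ∪ S) S ∨
          G.HasW5In (H2 ∪ S) S ∨ G.HasW6In (H2 ∪ S) S) :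
    G.HasF5 ∨ G.HasD :=
  hasF5orD_of_W5W6_general G hC S H1 H2 hmin hw
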